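/- arXiv:2512.10154 — 2 statements merged into one kernel-verified Lean document; each statement's English description precedes it below -/
import Mathlib

section
/- Let 𝓜 = (M,<,+,0,…) be a definably complete expansion of an ordered group and dim : Def(𝓜) → ℕ ∪ {−∞} a dimension function. Suppose there exists a definable non-closed discrete subset Z of M whose closure cl(Z) is a union of finitely many definable discrete sets. Then dim X = 0 for every nonempty definable discrete subset X of M. -/
open FirstOrder FirstOrder.Language Set

universe u v w

namespace PaperDim

section Core

variable (L : FirstOrder.Language.{v, w}) (M : Type u) [L.Structure M]

/-- The collection of definable subsets of `M^n` (definable with parameters from `M`). -/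
abbrev DefSet (n : ℕ) : Type u :=
  {X : Set (Fin n → M) // Set.Definable (Set.univ : Set M) L X}

variable {L M}

/-- A definable subset of `M^1` viewed as a subset of `M`. -/
def asSet1 (X : Set (Fin 1 → M)) : Set M := {a : M | (fun _ => a) ∈ X}

/-- The fiber of `X ⊆ M^{n+1}` over `x ∈ M^n`, as a subset of `M^1`. -/
def fiber {n : ℕ} (X : Set (Fin (n + 1) → M)) (x : Fin n → M) : Set (Fin 1 → M) :=
  {y | Fin.snoc x (y 0) ∈ X}

/-- Condition (1) of a dimension function: `dim ∅ = -∞`, `dim {a} = 0`, `dim M = 1`.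
Here `d k` is the value of the dimension function on definable subsets of `M^{k+1}`. -/
def Cond1 (d : ∀ n : ℕ, DefSet L M (n + 1) → WithBot ℕ) : Prop :=
  (∀ X : DefSet L M 1, X.1 = ∅ → d 0 X = ⊥) ∧
  (∀ (X : DefSet L M 1) (a : M), X.1 = ({fun _ => a} : Set (Fin 1 → M)) → d 0 X = 0) ∧
  (∀ X : DefSet L M 1, X.1 = (Set.univ : Set (Fin 1 → M)) → d 0 X = 1)

/-- Condition (2)ₙ (at arity `n + 1`): `dim (X ∪ Y) = max (dim X) (dim Y)`. -/
def Cond2 (d : ∀ n : ℕ, DefSet L M (n + 1) → WithBot ℕ) (n : ℕ) : Prop :=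
  ∀ X Y Z : DefSet L M (n + 1), Z.1 = X.1 ∪ Y.1 → d n Z = max (d n X) (d n Y)

/-- Condition (3)ₙ (at arity `n + 1`): invariance under coordinate permutations. -/
def Cond3 (d : ∀ n : ℕ, DefSet L M (n + 1) → WithBot ℕ) (n : ℕ) : Prop :=
  ∀ (σ : Equiv.Perm (Fin (n + 1))) (X Y : DefSet L M (n + 1)),
    Y.1 = {y : Fin (n + 1) → M | y ∘ σ ∈ X.1} → d n Y = d n X

/-- Condition (3'): invariance under switching the two coordinates, at arity 2. -/
def Cond3' (d : ∀ n : ℕ, DefSet L M (n + 1) → WithBot ℕ) : Prop :=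
  ∀ X Y : DefSet L M 2, Y.1 = {v : Fin 2 → M | ![v 1, v 0] ∈ X.1} → d 1 Y = d 1 X

/-- Condition (4)ₙ, the addition property (at arity `n + 2`):
the set `X(i)` of points over which the fiber of `X` has dimension `i` is definable, and
`dim (X ∩ Π⁻¹(X(i))) = dim X(i) + i`. -/
def Cond4 (d : ∀ n : ℕ, DefSet L M (n + 1) → WithBot ℕ) (n : ℕ) : Prop :=
  ∀ (X : DefSet L M (n + 2)) (i : Fin 2),
    ∃ (Xi : DefSet L M (n + 1)) (W : DefSet L M (n + 2)),
      Xi.1 = {x : Fin (n + 1) → M |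
        ∃ hf : Set.Definable (Set.univ : Set M) L (fiber X.1 x),
          d 0 ⟨fiber X.1 x, hf⟩ = ((i : ℕ) : WithBot ℕ)} ∧
      W.1 = X.1 ∩ (fun z : Fin (n + 2) → M => z ∘ Fin.castSucc) ⁻¹' Xi.1 ∧
      d (n + 1) W = d n Xi + ((i : ℕ) : WithBot ℕ)

/-- A dimension function on the structure `M` (van den Dries). -/
def IsDimFun (d : ∀ n : ℕ, DefSet L M (n + 1) → WithBot ℕ) : Prop :=
  Cond1 d ∧ (∀ n, Cond2 d n) ∧ (∀ n, Cond3 d n) ∧ (∀ n, Cond4 d n)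

/-- A weak dimension function: conditions (1), (2)₁, (3') and (4)ₙ for all `n > 1`. -/
def IsWeakDimFun (d : ∀ n : ℕ, DefSet L M (n + 1) → WithBot ℕ) : Prop :=
  Cond1 d ∧ Cond2 d 0 ∧ Cond3' d ∧ (∀ n, Cond4 d n)

variable (L M)

/-- The set `DIM(M)` of dimension functions on `M`. -/
def DimFuns : Set (∀ n : ℕ, DefSet L M (n + 1) → WithBot ℕ) := {d | IsDimFun d}

/-- `𝔫_dim(M)`: the cardinality of the set of dimension functions on `M`. -/
noncomputable def nDim : Cardinal := Cardinal.mk (DimFuns L M)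

/-- The order `<` is definable in the structure. -/
def LtDefinable [LT M] : Prop :=
  Set.Definable (Set.univ : Set M) L {v : Fin 2 → M | v 0 < v 1}

/-- The graph of addition is definable in the structure. -/
def AddDefinable [Add M] : Prop :=
  Set.Definable (Set.univ : Set M) L {v : Fin 3 → M | v 0 + v 1 = v 2}

/-- The graph of multiplication is definable in the structure. -/
def MulDefinable [Mul M] : Prop :=
  Set.Definable (Set.univ : Set M) L {v : Fin 3 → M | v 0 * v 1 = v 2}

end Core

/-- The order topology on a linear order, generated by open rays. -/
def orderTop (α : Type*) [LinearOrder α] : TopologicalSpace α :=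
  TopologicalSpace.generateFrom {s : Set α | (∃ a, s = Set.Ioi a) ∨ (∃ a, s = Set.Iio a)}

/-- A set is discrete (w.r.t. a topology `t`) if all of its points are isolated in it. -/
def DiscreteIn {α : Type*} (t : TopologicalSpace α) (D : Set α) : Prop :=
  ∀ x ∈ D, ∃ U : Set α, t.IsOpen U ∧ U ∩ D = {x}

/-- An open interval: a nonempty set of the form `(a, b)` with `a, b ∈ M ∪ {±∞}`. -/
def IsOpenInterval {α : Type*} [Preorder α] (S : Set α) : Prop :=
  S.Nonempty ∧ ((∃ a b, S = Set.Ioo a b) ∨ (∃ a, S = Set.Ioi a) ∨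
    (∃ b, S = Set.Iio b) ∨ S = Set.univ)

section Ord

variable (L : FirstOrder.Language.{v, w}) (M : Type u) [L.Structure M]

/-- O-minimality: every definable subset of `M` is a union of a finite set and finitely many
open intervals. -/
def OMinimal [LinearOrder M] : Prop :=
  ∀ X : DefSet L M 1, ∃ (F : Set M) (k : ℕ) (C : Fin k → Set M),
    F.Finite ∧ (∀ i, IsOpenInterval (C i)) ∧ asSet1 X.1 = F ∪ ⋃ i, C i

/-- Weak o-minimality: every definable subset of `M` is a union of finitely many convex sets. -/
def WeaklyOMinimal [LinearOrder M] : Prop :=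
  ∀ X : DefSet L M 1, ∃ (k : ℕ) (C : Fin k → Set M),
    (∀ i, (C i).OrdConnected) ∧ asSet1 X.1 = ⋃ i, C i

/-- Definable completeness: every definable subset of `M` has a supremum and an infimum in
`M ∪ {±∞}`. -/
def DefinablyComplete [LinearOrder M] : Prop :=
  ∀ X : DefSet L M 1,
    ((asSet1 X.1).Nonempty → BddAbove (asSet1 X.1) → ∃ a, IsLUB (asSet1 X.1) a) ∧
    ((asSet1 X.1).Nonempty → BddBelow (asSet1 X.1) → ∃ a, IsGLB (asSet1 X.1) a)

/-- d-minimality: the structure is definably complete and in every elementarily equivalent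
structure, every definable subset of the universe is a union of an open set and finitely many
discrete sets. The linear order is assumed to be the interpretation of the relation symbol `lt`. -/
def DMinimal [LinearOrder M] (lt : L.Relations 2) : Prop :=
  DefinablyComplete L M ∧
  ∀ (N : Type u) [L.Structure N] [LinearOrder N],
    (∀ a b : N, Structure.RelMap lt ![a, b] ↔ a < b) →
    L.ElementarilyEquivalent M N →
    ∀ X : DefSet L N 1,
      ∃ (U : Set N) (k : ℕ) (D : Fin k → Set N),
        (orderTop N).IsOpen U ∧ (∀ i, DiscreteIn (orderTop N) (D i)) ∧
        asSet1 X.1 = U ∪ ⋃ i, D i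

end Ord

open scoped Classical in
/-- The topological dimension of a definable set: the largest `d` such that the image of the
set under some coordinate projection `M^n → M^d` has nonempty interior (w.r.t. the order
topology and the corresponding product topologies). -/
noncomputable def dimTop {M : Type u} [LinearOrder M] {n : ℕ} (X : Set (Fin n → M)) :
    WithBot ℕ :=
  if X = ∅ then ⊥
  else
    ↑(sSup {d : ℕ | ∃ f : Fin d → Fin n, Function.Injective f ∧
      (@interior (Fin d → M) (@Pi.topologicalSpace (Fin d) (fun _ => M) (fun _ => orderTop M))
        ((fun x : Fin n → M => x ∘ f) '' X)).Nonempty})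


/-! ### Extra notions -/

/-- `G ⊆ M²` is the graph of a bijection from `A` onto `B`. -/
def IsDefBijectionGraph {M : Type u} (G : Set (Fin 2 → M)) (A B : Set M) : Prop :=
  (∀ v ∈ G, v 0 ∈ A ∧ v 1 ∈ B) ∧
  (∀ x ∈ A, ∃! y : M, (![x, y] : Fin 2 → M) ∈ G) ∧
  (∀ y ∈ B, ∃! x : M, (![x, y] : Fin 2 → M) ∈ G)

section Extra

variable (L : FirstOrder.Language.{v, w}) (M : Type u) [L.Structure M]

/-- A definable set `I ⊆ M` is self-sufficient if it is infinite and there is no definable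
bijection between an infinite definable subset of `I` and an infinite definable subset of
`M ∖ I`. -/
def SelfSufficient (I : Set M) : Prop :=
  I.Infinite ∧
  ∀ J₁ J₂ : DefSet L M 1, asSet1 J₁.1 ⊆ I → asSet1 J₂.1 ⊆ Iᶜ →
    (asSet1 J₁.1).Infinite → (asSet1 J₂.1).Infinite →
    ¬ ∃ G : DefSet L M 2, IsDefBijectionGraph G.1 (asSet1 J₁.1) (asSet1 J₂.1)

/-- A self-sufficient set is minimally self-sufficient if every self-sufficient set either
meets it in a finite set or contains it up to a finite set. -/
def MinimallySelfSufficient (I : Set M) : Prop :=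
  SelfSufficient L M I ∧
  ∀ X : DefSet L M 1, SelfSufficient L M (asSet1 X.1) →
    (I ∩ asSet1 X.1).Finite ∨ ∃ F : Set M, F.Finite ∧ I ⊆ asSet1 X.1 ∪ F

end Extra

/-- `I₁ ∼_fin I₂`: the symmetric difference is finite. -/
def FinSymmDiff {M : Type u} (A B : Set M) : Prop := ((A \ B) ∪ (B \ A)).Finite

/-- `I⟨τ⟩`: the product of copies of `I` (where `τ i = false`) and `M ∖ I`
(where `τ i = true`). -/
def Itau {M : Type u} (I : Set M) {n : ℕ} (τ : Fin n → Bool) : Set (Fin n → M) :=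
  {v | ∀ i, if τ i then v i ∉ I else v i ∈ I}

open scoped Classical in
/-- The value of `Dim[I]` on a (nonempty) definable set contained in `I⟨τ⟩`. -/
noncomputable def DimIPiece {M : Type u} [LinearOrder M] (I : Set M) :
    (n : ℕ) → (Fin (n + 1) → Bool) → Set (Fin (n + 1) → M) → WithBot ℕ
  | 0, τ, X =>
    if X = ∅ then ⊥ else if τ 0 then 0 else dimTop X
  | n + 1, τ, X =>
    if X = ∅ then ⊥
    else if τ (Fin.last (n + 1)) then
      DimIPiece I n (fun i => τ i.castSucc)
        ((fun v : Fin (n + 2) → M => v ∘ Fin.castSucc) '' X)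
    else
      max (dimTop {x : Fin (n + 1) → M |
              (∃ v ∈ X, v ∘ Fin.castSucc = x) ∧ dimTop (fiber X x) ≠ 1})
        (dimTop {x : Fin (n + 1) → M | dimTop (fiber X x) = 1} + 1)

/-- The function `Dim[I]` associated with a subset `I` of `M` (the input dimension being the
topological dimension). -/
noncomputable def DimI {M : Type u} [LinearOrder M] (I : Set M) (n : ℕ)
    (X : Set (Fin (n + 1) → M)) : WithBot ℕ :=
  Finset.univ.sup fun τ : Fin (n + 1) → Bool => DimIPiece I n τ (X ∩ Itau I τ)

section Morley

variable (L : FirstOrder.Language.{v, w}) (M : Type u) [L.Structure M]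

/-- The model-theoretic algebraic closure of a set of parameters `A`. -/
def aclS (A : Set M) : Set M :=
  {a : M | ∃ s : Set (Fin 1 → M), Set.Definable A L s ∧ s.Finite ∧ (fun _ => a) ∈ s}

open scoped Classical in
/-- The rank `rk^acl(X/A)`: the largest cardinality of a subset of the coordinates of a point
of `X` that is `acl`-independent over `A` (and `-∞` for `X = ∅`). -/
noncomputable def rkOver {n : ℕ} (A : Set M) (X : Set (Fin n → M)) : WithBot ℕ :=
  if X = ∅ then ⊥
  else
    ↑(sSup {k : ℕ | ∃ x ∈ X, ∃ S : Finset (Fin n), S.card = k ∧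
        ∀ i ∈ S, x i ∉ aclS L M (A ∪ x '' {j : Fin n | j ∈ S ∧ j ≠ i})})

/-- A structure is minimal if every definable subset of the universe is finite or cofinite. -/
def MinimalStr : Prop :=
  ∀ X : DefSet L M 1, (asSet1 X.1).Finite ∨ ((asSet1 X.1)ᶜ : Set M).Finite

/-- A structure is strongly minimal if every elementarily equivalent structure is minimal. -/
def StronglyMinimal : Prop :=
  MinimalStr L M ∧
  ∀ (N : Type u) [L.Structure N], L.ElementarilyEquivalent M N → MinimalStr L N

end Morley

section Theories

/-- A divisible Abelian group structure on a subset `S`, with addition `f`. -/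
def DivAbGroupOn {α : Type*} (f : α → α → α) (S : Set α) : Prop :=
  (∀ x ∈ S, ∀ y ∈ S, f x y ∈ S) ∧
  (∀ x ∈ S, ∀ y ∈ S, f x y = f y x) ∧
  (∀ x ∈ S, ∀ y ∈ S, ∀ z ∈ S, f (f x y) z = f x (f y z)) ∧
  (∃ e ∈ S, (∀ x ∈ S, f e x = x) ∧ (∀ x ∈ S, ∃ y ∈ S, f x y = e)) ∧
  (∀ k : ℕ, 0 < k → ∀ x ∈ S, ∃ y ∈ S, (f y)^[k - 1] y = x)

/-- Embedding of `M` into `M ∪ {±∞}`. -/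
def emb {α : Type*} (x : α) : WithBot (WithTop α) := ((x : WithTop α) : WithBot (WithTop α))

/-- `M` is a model of the theory `T_m` of Proposition 3.17: a DLO with constants
`c_1 < ⋯ < c_{m-1}` (recorded here by the boundary sequence
`⊥ = c 0 < c 1 < ⋯ < c m = ⊤` in `M ∪ {±∞}`), such that `+` restricts to a divisible Abelian
group on each interval `(c_{i-1}, c_i)` and is constantly `c_1` off the union of the
`(c_{i-1}, c_i)²`. -/
def ModelTm (m : ℕ) (hm : 0 < m) (L : FirstOrder.Language.{v, w}) (M : Type u)
    [L.Structure M] [LinearOrder M]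
    (lt : L.Relations 2) (plus : L.Functions 2)
    (c : Fin (m + 1) → WithBot (WithTop M)) : Prop :=
  DenselyOrdered M ∧ NoMinOrder M ∧ NoMaxOrder M ∧ Nonempty M ∧
  (∀ x y : M, Structure.RelMap lt ![x, y] ↔ x < y) ∧
  c 0 = ⊥ ∧ c (Fin.last m) = ⊤ ∧ StrictMono c ∧
  (∀ i : Fin (m + 1), i ≠ 0 → i ≠ Fin.last m → ∃ x : M, c i = emb x) ∧
  (∀ i : Fin m,
    DivAbGroupOn (fun x y : M => Structure.funMap plus ![x, y])
      {x : M | c i.castSucc < emb x ∧ emb x < c i.succ}) ∧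
  (∀ x y : M,
    (¬ ∃ i : Fin m, (c i.castSucc < emb x ∧ emb x < c i.succ) ∧
        (c i.castSucc < emb y ∧ emb y < c i.succ)) →
    ∀ z : M, c ⟨1, by omega⟩ = emb z → Structure.funMap plus ![x, y] = z)

/-- The set of realizations of a unary predicate. -/
def relSet (L : FirstOrder.Language.{v, w}) (M : Type u) [L.Structure M]
    (r : L.Relations 1) : Set M :=
  {x : M | Structure.RelMap r ![x]}

/-- `M` is a model of the theory `T_m` of Theorem 3.18: an ordered divisible Abelian group
with a strictly increasing chain of nontrivial proper convex subgroups `U_1 ⊊ ⋯ ⊊ U_m ⊊ M`. -/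
def ModelTw (m : ℕ) (L : FirstOrder.Language.{v, w}) (M : Type u)
    [L.Structure M] [AddCommGroup M] [LinearOrder M] [IsOrderedAddMonoid M]
    (lt : L.Relations 2) (plus : L.Functions 2) (U : Fin m → L.Relations 1) : Prop :=
  (∀ x y : M, Structure.RelMap lt ![x, y] ↔ x < y) ∧
  (∀ x y : M, Structure.funMap plus ![x, y] = x + y) ∧
  (∀ k : ℕ, 0 < k → ∀ x : M, ∃ y : M, k • y = x) ∧
  (∀ i : Fin m,
    (0 : M) ∈ relSet L M (U i) ∧
    (∀ x ∈ relSet L M (U i), ∀ y ∈ relSet L M (U i), x + y ∈ relSet L M (U i)) ∧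
    (∀ x ∈ relSet L M (U i), -x ∈ relSet L M (U i)) ∧
    (relSet L M (U i)).OrdConnected ∧
    relSet L M (U i) ≠ {0} ∧ relSet L M (U i) ≠ Set.univ) ∧
  (∀ i j : Fin m, i < j → relSet L M (U i) ⊂ relSet L M (U j))

end Theories



/-!
Every interval has dimension one. Translations and `x ↦ -x` are definable bijections, so they
preserve dimension; as `M = (-∞, 0) ∪ {0} ∪ (0, ∞)` and `dim (-∞, 0) = dim (0, ∞)`, this forces
`dim (0, ∞) = 1`, and then `dim [y, ∞) = 1`. If every `(0, s]` had dimension `0`, the set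
`{(x, y) | 0 < y ≤ x}` would have dimension `dim (0, ∞) + 0 = 1` by the addition property and
`dim (0, ∞) + 1 = 2` after swapping coordinates. Hence the definable set `{s | dim (0, s] = 0}`
is bounded above. It is closed under doubling, as `(0, 2s] = (0, s] ∪ (s, 2s]`, so it has no
supremum, and by definable completeness it is empty.

For a discrete `X`, let `G a b` say that `a ∈ X`, `a < b` and `(a, b)` misses `X`. The fiber of
`G` over each `a ∈ X` contains an interval `(a, c]`, so `dim G = dim X + 1`; each fiber of the
transpose has at most one point, so `dim G ≤ 1`. Hence `dim X = 0`.
-/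

section Definability

variable {L : FirstOrder.Language.{v, w}} {M : Type u} [L.Structure M]

lemma const_apply_zero (x : Fin 1 → M) : (fun _ : Fin 1 => x 0) = x :=
  funext fun i => by rw [Subsingleton.elim i 0]

lemma mem_iff_apply_zero_mem_asSet1 {X : Set (Fin 1 → M)} {x : Fin 1 → M} :
    x ∈ X ↔ x 0 ∈ asSet1 X := by
  rw [asSet1, mem_ofPred_eq, const_apply_zero]

lemma asSet1_injective : Function.Injective (asSet1 : Set (Fin 1 → M) → Set M) :=
  fun X Y h => Set.ext fun x => by
    rw [mem_iff_apply_zero_mem_asSet1, mem_iff_apply_zero_mem_asSet1, h]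

lemma snoc_eq_vecCons (x : Fin 1 → M) (b : M) : (Fin.snoc x b : Fin 2 → M) = ![x 0, b] := by
  funext i; fin_cases i <;> rfl

lemma asSet1_fiber_rel (R : M → M → Prop) (x : Fin 1 → M) :
    asSet1 (fiber {v : Fin 2 → M | R (v 0) (v 1)} x) = {b | R (x 0) b} := by
  ext b
  simp [asSet1, fiber, snoc_eq_vecCons]

lemma definableMap_vec₂ {α : Type*} {f g : (α → M) → M}
    (hf : (univ : Set M).DefinableFun L f) (hg : (univ : Set M).DefinableFun L g) :
    (univ : Set M).DefinableMap L fun v => ![f v, g v] := by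
  intro i; fin_cases i; exacts [hf, hg]

lemma definable_fiber {S : Set (Fin 2 → M)} (hS : (univ : Set M).Definable L S)
    (x : Fin 1 → M) : (univ : Set M).Definable L (fiber S x) := by
  have hfib : fiber S x = (fun y => ![x 0, y 0]) ⁻¹' S := by
    ext y; simp [fiber, snoc_eq_vecCons]
  rw [hfib]
  exact Definable.preimage_map
    (definableMap_vec₂ (f := fun _ : Fin 1 → M => x 0) (g := fun y => y 0)
      (by fun_prop (disch := simp)) (by fun_prop)) hS

lemma definable_mem_asSet1 {α : Type*} (X : DefSet L M 1) {f : (α → M) → M}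
    (hf : (univ : Set M).DefinableFun L f) :
    (univ : Set M).Definable L {v | f v ∈ asSet1 X.1} :=
  Definable.preimage_map (F := fun v (_ : Fin 1) => f v) (fun _ => hf) X.2

def defSet1 {s : Set M} (hs : (univ : Set M).Definable₁ L s) : DefSet L M 1 :=
  ⟨{x | x 0 ∈ s}, hs⟩

@[simp]
lemma asSet1_defSet1 {s : Set M} (hs : (univ : Set M).Definable₁ L s) :
    asSet1 (defSet1 hs).1 = s := rfl

lemma LtDefinable.definable_lt [LT M] (hlt : LtDefinable L M) {α : Type*}
    {f g : (α → M) → M} (hf : (univ : Set M).DefinableFun L f)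
    (hg : (univ : Set M).DefinableFun L g) :
    (univ : Set M).Definable L {v | f v < g v} :=
  Definable.preimage_map (definableMap_vec₂ hf hg) hlt

lemma LtDefinable.definable_le [LinearOrder M] (hlt : LtDefinable L M) {α : Type*}
    {f g : (α → M) → M} (hf : (univ : Set M).DefinableFun L f)
    (hg : (univ : Set M).DefinableFun L g) :
    (univ : Set M).Definable L {v | f v ≤ g v} := by
  simpa [compl_ofPred] using (hlt.definable_lt hg hf).compl

lemma AddDefinable.definable_add_eq [Add M] (hadd : AddDefinable L M) {α : Type*}
    {f g h : (α → M) → M} (hf : (univ : Set M).DefinableFun L f)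
    (hg : (univ : Set M).DefinableFun L g) (hh : (univ : Set M).DefinableFun L h) :
    (univ : Set M).Definable L {v | f v + g v = h v} :=
  Definable.preimage_map (F := fun v => ![f v, g v, h v])
    (fun i => by fin_cases i; exacts [hf, hg, hh]) hadd

lemma asSet1_singleton_const (a : M) : asSet1 {fun _ : Fin 1 => a} = {a} := by
  ext b; simp [asSet1, funext_iff]

lemma definable₁_univ : (univ : Set M).Definable₁ L univ := definable_univ

lemma definable₁_singleton (a : M) : (univ : Set M).Definable₁ L {a} :=
  (Definable.singleton L a).mono (subset_univ _)

section Order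

variable [LinearOrder M]

lemma definable₁_Ioi (hlt : LtDefinable L M) (a : M) : (univ : Set M).Definable₁ L (Ioi a) :=
  hlt.definable_lt (f := fun _ => a) (g := fun x => x 0) (by fun_prop (disch := simp))
    (by fun_prop)

lemma definable₁_Iio (hlt : LtDefinable L M) (a : M) : (univ : Set M).Definable₁ L (Iio a) :=
  hlt.definable_lt (f := fun x => x 0) (g := fun _ => a) (by fun_prop)
    (by fun_prop (disch := simp))

lemma definable₁_Ici (hlt : LtDefinable L M) (a : M) :
    (univ : Set M).Definable₁ L (Ici a) := by
  simpa [Definable₁, compl_ofPred] using (definable₁_Iio hlt a).compl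

lemma definable₁_Ioc (hlt : LtDefinable L M) (a b : M) :
    (univ : Set M).Definable₁ L (Ioc a b) := by
  simpa [Definable₁, compl_ofPred, ofPred_and] using
    (definable₁_Ioi hlt a).inter (definable₁_Ioi hlt b).compl

lemma exists_defSet_zero_lt_le [Zero M] (hlt : LtDefinable L M) :
    ∃ S : DefSet L M 2, S.1 = {v | 0 < v 1 ∧ v 1 ≤ v 0} :=
  have hpos := hlt.definable_lt (f := fun _ => 0) (g := fun v : Fin 2 → M => v 1)
    (by fun_prop (disch := simp)) (by fun_prop)
  have hle := hlt.definable_le (f := fun v : Fin 2 → M => v 1) (g := fun v => v 0)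
    (by fun_prop) (by fun_prop)
  ⟨⟨_, hpos.inter hle⟩, rfl⟩

end Order

end Definability

section DimFun

variable {L : FirstOrder.Language.{v, w}} {M : Type u} [L.Structure M]
  {d : ∀ n : ℕ, DefSet L M (n + 1) → WithBot ℕ}

lemma dim_congr_asSet1 {X Y : DefSet L M 1} (h : asSet1 X.1 = asSet1 Y.1) :
    d 0 X = d 0 Y :=
  congrArg (d 0) (Subtype.ext (asSet1_injective h))

namespace IsDimFun

lemma eq_bot_of_empty (hd : IsDimFun d) {X : DefSet L M 1} (h : asSet1 X.1 = ∅) :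
    d 0 X = ⊥ :=
  hd.1.1 X (asSet1_injective h)

lemma eq_zero_of_singleton (hd : IsDimFun d) {X : DefSet L M 1} {a : M}
    (h : asSet1 X.1 = {a}) : d 0 X = 0 :=
  hd.1.2.1 X a (asSet1_injective (h.trans (asSet1_singleton_const a).symm))

lemma eq_one_of_univ (hd : IsDimFun d) {X : DefSet L M 1} (h : asSet1 X.1 = univ) :
    d 0 X = 1 :=
  hd.1.2.2 X (asSet1_injective h)

lemma union (hd : IsDimFun d) {X Y Z : DefSet L M 1}
    (h : asSet1 Z.1 = asSet1 X.1 ∪ asSet1 Y.1) : d 0 Z = max (d 0 X) (d 0 Y) :=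
  hd.2.1 0 X Y Z (asSet1_injective h)

lemma mono (hd : IsDimFun d) {X Y : DefSet L M 1} (h : asSet1 X.1 ⊆ asSet1 Y.1) :
    d 0 X ≤ d 0 Y := by
  rw [hd.union (X := X) (Y := Y) (union_eq_self_of_subset_left h).symm]
  exact le_max_left _ _

lemma eq_zero_of_subsingleton (hd : IsDimFun d) {X : DefSet L M 1}
    (hne : (asSet1 X.1).Nonempty) (hs : (asSet1 X.1).Subsingleton) : d 0 X = 0 :=
  have ⟨_, ha⟩ := hne
  hd.eq_zero_of_singleton (hs.eq_singleton_of_mem ha)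

lemma nonneg (hd : IsDimFun d) {X : DefSet L M 1} (hne : (asSet1 X.1).Nonempty) :
    0 ≤ d 0 X := by
  obtain ⟨a, ha⟩ := hne
  rw [← hd.eq_zero_of_singleton (asSet1_defSet1 (definable₁_singleton a))]
  exact hd.mono (singleton_subset_iff.mpr ha)

lemma le_one (hd : IsDimFun d) (X : DefSet L M 1) : d 0 X ≤ 1 := by
  rw [← hd.eq_one_of_univ (asSet1_defSet1 (definable₁_univ (L := L)))]
  exact hd.mono (subset_univ _)

lemma eq_zero_or_one (hd : IsDimFun d) {X : DefSet L M 1} (hne : (asSet1 X.1).Nonempty) :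
    d 0 X = 0 ∨ d 0 X = 1 := by
  have h0 := hd.nonneg hne
  have h1 := hd.le_one X
  induction h : d 0 X using WithBot.recBotCoe with
  | bot => simp [h] at h0
  | coe n =>
    rw [h] at h0 h1
    have : n ≤ 1 := WithBot.coe_le_coe.mp h1
    interval_cases n <;> simp

lemma exists_fiberDimSet (hd : IsDimFun d) {R : M → M → Prop} {S : DefSet L M 2}
    (hS : S.1 = {v | R (v 0) (v 1)}) (i : Fin 2) :
    ∃ (A : DefSet L M 1) (W : DefSet L M 2),
      (∀ a (F : DefSet L M 1), asSet1 F.1 = {b | R a b} →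
        (a ∈ asSet1 A.1 ↔ d 0 F = ((i : ℕ) : WithBot ℕ))) ∧
      W.1 = {v | R (v 0) (v 1) ∧ v 0 ∈ asSet1 A.1} ∧
      d 1 W = d 0 A + ((i : ℕ) : WithBot ℕ) := by
  obtain ⟨A, W, hA, hW, hdim⟩ := hd.2.2.2 0 S i
  refine ⟨A, W, fun a F hF => ?_, ?_, hdim⟩
  · have hfib : asSet1 (fiber S.1 fun _ => a) = asSet1 F.1 := by
      rw [hS, asSet1_fiber_rel, hF]
    change (fun _ => a) ∈ A.1 ↔ _
    rw [hA]
    exact ⟨fun ⟨_, h⟩ => (dim_congr_asSet1 hfib).symm.trans h,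
      fun h => ⟨definable_fiber S.2 _, (dim_congr_asSet1 hfib).trans h⟩⟩
  · rw [hW, hS]
    ext v
    exact and_congr_right fun _ => mem_iff_apply_zero_mem_asSet1

lemma exists_eq_add_of_forall_fiber (hd : IsDimFun d) {R : M → M → Prop}
    {S : DefSet L M 2} (hS : S.1 = {v | R (v 0) (v 1)}) (i : Fin 2)
    (hfib : ∀ a b, R a b → ∀ F : DefSet L M 1, asSet1 F.1 = {b | R a b} →
      d 0 F = ((i : ℕ) : WithBot ℕ)) :
    ∃ A : DefSet L M 1, asSet1 A.1 = {a | ∃ b, R a b} ∧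
      d 1 S = d 0 A + ((i : ℕ) : WithBot ℕ) := by
  obtain ⟨A, W, hA, hW, hdim⟩ := hd.exists_fiberDimSet hS i
  have hAdom : asSet1 A.1 = {a | ∃ b, R a b} := by
    ext a
    let F : DefSet L M 1 := ⟨fiber S.1 fun _ => a, definable_fiber S.2 _⟩
    have hF : asSet1 F.1 = {b | R a b} := by simp only [F, hS, asSet1_fiber_rel]
    rw [hA a F hF]
    refine ⟨fun h => ?_, fun ⟨b, hb⟩ => hfib a b hb F hF⟩
    by_contra hempty
    have hbot := hd.eq_bot_of_empty (hF.trans (eq_empty_of_forall_notMem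
      fun b hb => hempty ⟨b, hb⟩))
    simp [hbot] at h
  refine ⟨A, hAdom, ?_⟩
  rw [← hdim]
  refine congrArg (d 1) (Subtype.ext ?_)
  rw [hW, hS, hAdom]
  ext v
  exact ⟨fun h => ⟨h, v 1, h⟩, And.left⟩

lemma exists_swap (hd : IsDimFun d) {R : M → M → Prop} {S : DefSet L M 2}
    (hS : S.1 = {v | R (v 0) (v 1)}) :
    ∃ T : DefSet L M 2, T.1 = {v | R (v 1) (v 0)} ∧ d 1 T = d 1 S := by
  let σ := Equiv.swap (0 : Fin 2) 1
  have hT : {v : Fin 2 → M | v ∘ σ ∈ S.1} = {v | R (v 1) (v 0)} := by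
    rw [hS]
    ext v
    simp [σ]
  exact ⟨⟨_, S.2.preimage_comp σ⟩, hT, hd.2.2.1 1 σ S _ rfl⟩

lemma eq_of_equiv (hd : IsDimFun d) (f : M ≃ M)
    (hf : (univ : Set M).Definable L {v : Fin 2 → M | f (v 0) = v 1}) {A B : DefSet L M 1}
    (hB : asSet1 B.1 = f ⁻¹' asSet1 A.1) : d 0 B = d 0 A := by
  let S : DefSet L M 2 := ⟨{v | v 0 ∈ asSet1 B.1 ∧ f (v 0) = v 1},
    (definable_mem_asSet1 B (f := fun v => v 0) (by fun_prop)).inter hf⟩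
  obtain ⟨B', hB', hSB⟩ := hd.exists_eq_add_of_forall_fiber
    (R := fun a b => a ∈ asSet1 B.1 ∧ f a = b) (S := S) rfl 0
    fun a b hab F hF =>
      hd.eq_zero_of_singleton (a := f a) (hF.trans (by ext; simp [hab.1, eq_comm]))
  obtain ⟨T, hT, hTS⟩ :=
    hd.exists_swap (R := fun a b => a ∈ asSet1 B.1 ∧ f a = b) (S := S) rfl
  obtain ⟨A', hA', hTA⟩ := hd.exists_eq_add_of_forall_fiber
    (R := fun b a => a ∈ asSet1 B.1 ∧ f a = b) hT 0
    fun b a hab F hF => hd.eq_zero_of_subsingleton ⟨a, hF ▸ hab⟩ (by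
      rw [hF]
      exact fun a₁ h₁ a₂ h₂ => f.injective (h₁.2.trans h₂.2.symm))
  have hBB' : d 0 B' = d 0 B := dim_congr_asSet1 (by rw [hB']; ext a; simp)
  have hAA' : d 0 A' = d 0 A := dim_congr_asSet1 (by
    rw [hA', hB]
    ext b
    exact ⟨fun ⟨a, ha, hab⟩ => hab ▸ ha, fun hb => ⟨f.symm b, by simpa using hb, by simp⟩⟩)
  simpa [hBB', hAA', hSB, hTA] using hTS.symm

end IsDimFun

end DimFun

section Group

variable {L : FirstOrder.Language.{v, w}} {M : Type u} [L.Structure M] [AddGroup M]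
  {d : ∀ n : ℕ, DefSet L M (n + 1) → WithBot ℕ}

namespace IsDimFun

lemma eq_of_preimage_add_right (hd : IsDimFun d) (hadd : AddDefinable L M) (c : M)
    {A B : DefSet L M 1} (hB : asSet1 B.1 = (· + c) ⁻¹' asSet1 A.1) : d 0 B = d 0 A :=
  hd.eq_of_equiv (Equiv.addRight c)
    (hadd.definable_add_eq (f := fun v => v 0) (g := fun _ => c) (h := fun v => v 1)
      (by fun_prop) (by fun_prop (disch := simp)) (by fun_prop)) hB

lemma eq_of_preimage_neg (hd : IsDimFun d) (hadd : AddDefinable L M) {A B : DefSet L M 1}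
    (hB : asSet1 B.1 = Neg.neg ⁻¹' asSet1 A.1) : d 0 B = d 0 A := by
  refine hd.eq_of_equiv (Equiv.neg M) ?_ hB
  simpa [neg_eq_iff_add_eq_zero] using hadd.definable_add_eq (f := fun v : Fin 2 → M => v 0)
    (g := fun v => v 1) (h := fun _ => 0) (by fun_prop) (by fun_prop)
    (by fun_prop (disch := simp))

end IsDimFun

end Group

section OrderedGroup

variable {L : FirstOrder.Language.{v, w}} {M : Type u} [L.Structure M] [LinearOrder M]
  [AddGroup M] {d : ∀ n : ℕ, DefSet L M (n + 1) → WithBot ℕ}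

attribute [local instance] addLeftMono_of_addLeftStrictMono addRightMono_of_addRightStrictMono

lemma not_isLUB_of_add_self_mem [AddLeftStrictMono M] [AddRightStrictMono M] {U : Set M}
    {t c : M} (ht : 0 < t) (htU : t ∈ U) (hU : ∀ u ∈ U, u + u ∈ U) : ¬ IsLUB U c := by
  intro hc
  obtain ⟨u, huU, hu, -⟩ := hc.exists_between (sub_lt_self c ht)
  have hmax : max t u ∈ U := by rcases max_choice t u with h | h <;> rw [h] <;> assumption
  exact lt_irrefl c <| calc
    c < u + t := sub_lt_iff_lt_add.mp hu
    _ ≤ max t u + max t u := add_le_add (le_max_right t u) (le_max_left t u)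
    _ ≤ c := hc.1 (hU _ hmax)

namespace IsDimFun

lemma eq_one_of_Ioi_zero [AddLeftStrictMono M] (hd : IsDimFun d) (hlt : LtDefinable L M)
    (hadd : AddDefinable L M) {F : DefSet L M 1} (hF : asSet1 F.1 = Ioi 0) : d 0 F = 1 := by
  let N : DefSet L M 1 := defSet1 (definable₁_Iio hlt 0)
  let P : DefSet L M 1 := defSet1 (definable₁_Ici hlt 0)
  let Z : DefSet L M 1 := defSet1 (definable₁_singleton (L := L) (0 : M))
  have hN : d 0 N = d 0 F := hd.eq_of_preimage_neg hadd (by rw [hF]; ext x; simp [N])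
  have hP : d 0 P = max (d 0 Z) (d 0 F) := hd.union (by
    rw [hF]; ext x; simp [P, Z, le_iff_eq_or_lt, eq_comm])
  have huniv : d 0 (defSet1 (definable₁_univ (L := L) (M := M))) = max (d 0 N) (d 0 P) :=
    hd.union (by ext x; simp [N, P])
  rw [hd.eq_one_of_univ rfl, hN, hP, hd.eq_zero_of_singleton (X := Z) rfl, max_left_comm,
    max_self] at huniv
  rcases max_choice (0 : WithBot ℕ) (d 0 F) with h | h <;> rw [h] at huniv
  · exact absurd huniv (by decide)
  · exact huniv.symm

lemma eq_one_of_Ioi [AddLeftStrictMono M] [AddRightStrictMono M] (hd : IsDimFun d)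
    (hlt : LtDefinable L M) (hadd : AddDefinable L M) (a : M) {F : DefSet L M 1}
    (hF : asSet1 F.1 = Ioi a) : d 0 F = 1 := by
  rw [← hd.eq_of_preimage_add_right hadd a (B := defSet1 (definable₁_Ioi hlt 0))
    (by rw [hF]; ext x; simp [lt_add_iff_pos_left])]
  exact hd.eq_one_of_Ioi_zero hlt hadd rfl

lemma eq_one_of_Ici [AddLeftStrictMono M] [AddRightStrictMono M] (hd : IsDimFun d)
    (hlt : LtDefinable L M) (hadd : AddDefinable L M) (a : M) {F : DefSet L M 1}
    (hF : asSet1 F.1 = Ici a) : d 0 F = 1 := by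
  refine le_antisymm (hd.le_one F) ?_
  rw [← hd.eq_one_of_Ioi hlt hadd a (asSet1_defSet1 (definable₁_Ioi hlt a))]
  exact hd.mono (hF ▸ Ioi_subset_Ici_self)

lemma eq_of_Ioc_sub [AddRightStrictMono M] (hd : IsDimFun d) (hadd : AddDefinable L M)
    {a b : M} {F G : DefSet L M 1} (hF : asSet1 F.1 = Ioc a b) (hG : asSet1 G.1 = Ioc 0 (b - a)) :
    d 0 G = d 0 F :=
  hd.eq_of_preimage_add_right hadd a (by
    rw [hF, hG]; ext x; simp [lt_add_iff_pos_left, le_sub_iff_add_le])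

lemma eq_zero_of_Ioc_add_self [AddRightStrictMono M] (hd : IsDimFun d) (hlt : LtDefinable L M)
    (hadd : AddDefinable L M) {s : M} (hs : 0 < s) {F G : DefSet L M 1}
    (hF : asSet1 F.1 = Ioc 0 s) (hG : asSet1 G.1 = Ioc 0 (s + s)) (h0 : d 0 F = 0) :
    d 0 G = 0 := by
  let H : DefSet L M 1 := defSet1 (definable₁_Ioc hlt s (s + s))
  have hH : d 0 H = d 0 F :=
    (hd.eq_of_Ioc_sub hadd rfl (by rw [hF, add_sub_cancel_right])).symm
  have hGFH : asSet1 G.1 = asSet1 F.1 ∪ asSet1 H.1 := by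
    rw [hG, hF]
    exact (Ioc_union_Ioc_eq_Ioc hs.le (le_add_of_nonneg_left hs.le)).symm
  rw [hd.union hGFH, hH, h0, max_self]

lemma not_forall_eq_zero_of_Ioc [AddLeftStrictMono M] [AddRightStrictMono M]
    (hd : IsDimFun d) (hlt : LtDefinable L M) (hadd : AddDefinable L M) :
    ¬ ∀ s : M, 0 < s → ∀ F : DefSet L M 1, asSet1 F.1 = Ioc 0 s → d 0 F = 0 := by
  intro h
  obtain ⟨S, hS⟩ := exists_defSet_zero_lt_le hlt
  obtain ⟨A, hA, hSA⟩ := hd.exists_eq_add_of_forall_fiber (R := fun x y => 0 < y ∧ y ≤ x)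
    hS 0 fun x y hxy F hF => h x (hxy.1.trans_le hxy.2) F hF
  obtain ⟨T, hT, hTS⟩ := hd.exists_swap (R := fun x y => 0 < y ∧ y ≤ x) hS
  obtain ⟨B, hB, hTB⟩ := hd.exists_eq_add_of_forall_fiber (R := fun y x => 0 < y ∧ y ≤ x)
    hT 1 fun y x hyx F hF => hd.eq_one_of_Ici hlt hadd y (hF.trans (by ext; simp [hyx.1]))
  have hA0 : asSet1 A.1 = Ioi 0 :=
    hA.trans (ext fun x => ⟨fun ⟨_, h0, hx⟩ => h0.trans_le hx, fun hx => ⟨x, hx, le_rfl⟩⟩)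
  have hB0 : asSet1 B.1 = Ioi 0 :=
    hB.trans (ext fun y => ⟨fun ⟨_, hy, _⟩ => hy, fun hy => ⟨y, hy, le_rfl⟩⟩)
  rw [hTB, hSA, hd.eq_one_of_Ioi hlt hadd 0 hA0, hd.eq_one_of_Ioi hlt hadd 0 hB0] at hTS
  norm_num at hTS

lemma eq_one_of_Ioc_zero [AddLeftStrictMono M] [AddRightStrictMono M] (hd : IsDimFun d)
    (hlt : LtDefinable L M) (hadd : AddDefinable L M) (hdc : DefinablyComplete L M) {t : M}
    (ht : 0 < t) {F : DefSet L M 1} (hF : asSet1 F.1 = Ioc 0 t) : d 0 F = 1 := by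
  let I : M → DefSet L M 1 := fun s => defSet1 (definable₁_Ioc hlt 0 s)
  obtain ⟨S, hS⟩ := exists_defSet_zero_lt_le hlt
  obtain ⟨U, -, hU, -⟩ := hd.exists_fiberDimSet (R := fun x y => 0 < y ∧ y ≤ x) hS 0
  have hUI : ∀ s, s ∈ asSet1 U.1 ↔ d 0 (I s) = 0 := fun s => hU s (I s) rfl
  have hUpos : ∀ s ∈ asSet1 U.1, 0 < s := fun s hs => by
    by_contra hs'
    have hbot := hd.eq_bot_of_empty (X := I s) (Ioc_eq_empty hs')
    simp [(hUI s).mp hs] at hbot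
  obtain ⟨s₁, hs₁, hs₁U⟩ : ∃ s₁, 0 < s₁ ∧ s₁ ∉ asSet1 U.1 := by
    by_contra! h
    exact hd.not_forall_eq_zero_of_Ioc hlt hadd fun s hs G hG =>
      (dim_congr_asSet1 hG).trans ((hUI s).mp (h s hs))
  have hbdd : s₁ ∈ upperBounds (asSet1 U.1) := fun u hu => by
    by_contra! hu₁
    refine hs₁U ((hUI s₁).mpr (le_antisymm ?_ (hd.nonneg ⟨s₁, hs₁, le_rfl⟩)))
    exact (hd.mono (X := I s₁) (Y := I u) (Ioc_subset_Ioc_right hu₁.le)).trans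
      ((hUI u).mp hu).le
  rw [dim_congr_asSet1 (d := d) (X := F) (Y := I t) hF]
  refine (hd.eq_zero_or_one (X := I t) ⟨t, ht, le_rfl⟩).resolve_left fun h0 => ?_
  have htU := (hUI t).mpr h0
  obtain ⟨c, hc⟩ := (hdc U).1 ⟨t, htU⟩ ⟨s₁, hbdd⟩
  refine not_isLUB_of_add_self_mem ht htU (fun u hu => ?_) hc
  exact (hUI _).mpr (hd.eq_zero_of_Ioc_add_self hlt hadd (hUpos u hu) rfl rfl ((hUI u).mp hu))

lemma eq_one_of_Ioc [AddLeftStrictMono M] [AddRightStrictMono M] (hd : IsDimFun d)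
    (hlt : LtDefinable L M) (hadd : AddDefinable L M) (hdc : DefinablyComplete L M) {a b : M}
    (hab : a < b) {F : DefSet L M 1} (hF : asSet1 F.1 = Ioc a b) : d 0 F = 1 := by
  rw [← hd.eq_of_Ioc_sub hadd hF (asSet1_defSet1 (definable₁_Ioc hlt 0 (b - a)))]
  exact hd.eq_one_of_Ioc_zero hlt hadd hdc (sub_pos.mpr hab) rfl

end IsDimFun

end OrderedGroup

lemma orderTop_eq_preorderTopology (α : Type*) [LinearOrder α] :
    orderTop α = Preorder.topology α := by
  simp only [orderTop, Preorder.topology, exists_or]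

lemma DiscreteIn.exists_Ioo_disjoint {α : Type*} [LinearOrder α] [NoMaxOrder α] {D : Set α}
    (hD : DiscreteIn (orderTop α) D) {a : α} (ha : a ∈ D) :
    ∃ b, a < b ∧ Disjoint (Ioo a b) D := by
  let _ := orderTop α
  have : OrderTopology α := ⟨orderTop_eq_preorderTopology α⟩
  obtain ⟨U, hU, hUD⟩ := hD a ha
  have haU : a ∈ U := ((hUD.symm ▸ mem_singleton a : a ∈ U ∩ D)).1
  obtain ⟨b, hab, hsub⟩ := exists_Ico_subset_of_mem_nhds (IsOpen.mem_nhds hU haU) (exists_gt a)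
  refine ⟨b, hab, disjoint_left.2 fun z hz hzD => hz.1.ne' ?_⟩
  have hz : z ∈ U ∩ D := ⟨hsub (Ioo_subset_Ico_self hz), hzD⟩
  rwa [hUD] at hz

section Gap

variable {M : Type u} [LinearOrder M]

def GapRel (X : Set M) (a b : M) : Prop := a ∈ X ∧ a < b ∧ Disjoint (Ioo a b) X

lemma GapRel.subsingleton_left (X : Set M) (b : M) : {a | GapRel X a b}.Subsingleton := by
  intro a₁ h₁ a₂ h₂
  by_contra hne
  rcases lt_or_gt_of_ne hne with h | h
  · exact disjoint_left.1 h₁.2.2 ⟨h, h₂.2.1⟩ h₂.1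
  · exact disjoint_left.1 h₂.2.2 ⟨h, h₁.2.1⟩ h₁.1

lemma GapRel.exists_Ioc_subset [DenselyOrdered M] [NoMaxOrder M] {X : Set M}
    (hX : DiscreteIn (orderTop M) X) {a : M} (ha : a ∈ X) :
    ∃ c, a < c ∧ Ioc a c ⊆ {b | GapRel X a b} := by
  obtain ⟨b, hab, hdisj⟩ := hX.exists_Ioo_disjoint ha
  obtain ⟨c, hac, hcb⟩ := exists_between hab
  exact ⟨c, hac, fun y hy =>
    ⟨ha, hy.1, hdisj.mono_left (Ioo_subset_Ioo_right (hy.2.trans hcb.le))⟩⟩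

lemma definable_gapRel {L : FirstOrder.Language.{v, w}} [L.Structure M]
    (hlt : LtDefinable L M) (X : DefSet L M 1) :
    (univ : Set M).Definable L {v : Fin 2 → M | GapRel (asSet1 X.1) (v 0) (v 1)} := by
  have hbetween : (univ : Set M).Definable L {w : Fin 2 ⊕ Fin 1 → M |
      w (.inr 0) ∈ asSet1 X.1 ∧ w (.inl 0) < w (.inr 0) ∧ w (.inr 0) < w (.inl 1)} :=
    (definable_mem_asSet1 X (by fun_prop)).inter
      ((hlt.definable_lt (by fun_prop) (by fun_prop)).inter
        (hlt.definable_lt (by fun_prop) (by fun_prop)))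
  have h := ((definable_mem_asSet1 X (f := fun v : Fin 2 → M => v 0) (by fun_prop)).inter
    (hlt.definable_lt (f := fun v => v 0) (g := fun v => v 1) (by fun_prop) (by fun_prop))).inter
    (Definable.exists_of_finite hbetween).compl
  convert h using 1
  ext v
  simp only [GapRel, Fin.isValue, disjoint_left, mem_Ioo, and_imp, mem_ofPred_eq, Sum.elim_inr,
    Sum.elim_inl, mem_inter_iff, mem_compl_iff, not_exists, not_and, not_lt]
  exact ⟨fun ⟨hX, hab, hgap⟩ => ⟨⟨hX, hab⟩, fun x hx h0 => not_lt.1 fun h1 => hgap h0 h1 hx⟩,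
    fun ⟨⟨hX, hab⟩, hgap⟩ => ⟨hX, hab, fun a h0 h1 hx => (hgap (fun _ => a) hx h0).not_gt h1⟩⟩

end Gap

theorem statement_14_general (L : FirstOrder.Language.{v, w}) (M : Type u) [L.Structure M]
    [LinearOrder M] [DenselyOrdered M] [NoMaxOrder M]
    [AddGroup M] [CovariantClass M M (· + ·) (· < ·)]
    [CovariantClass M M (Function.swap (· + ·)) (· < ·)]
    (hlt : LtDefinable L M) (hadd : AddDefinable L M) (hdc : DefinablyComplete L M)
    (d : ∀ n : ℕ, DefSet L M (n + 1) → WithBot ℕ) (hd : d ∈ DimFuns L M) :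
    ∀ X : DefSet L M 1, (asSet1 X.1).Nonempty → DiscreteIn (orderTop M) (asSet1 X.1) →
      d 0 X = 0 := by
  replace hd : IsDimFun d := hd
  intro X hXne hXdisc
  obtain ⟨G, hG⟩ : ∃ G : DefSet L M 2, G.1 = {v | GapRel (asSet1 X.1) (v 0) (v 1)} :=
    ⟨⟨_, definable_gapRel hlt X⟩, rfl⟩
  obtain ⟨A, hA, hGA⟩ := hd.exists_eq_add_of_forall_fiber hG 1 fun a _ hab F hF => by
    obtain ⟨c, hac, hsub⟩ := GapRel.exists_Ioc_subset hXdisc hab.1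
    refine le_antisymm (hd.le_one F) ?_
    calc (1 : WithBot ℕ)
        = d 0 (defSet1 (definable₁_Ioc hlt a c)) := (hd.eq_one_of_Ioc hlt hadd hdc hac rfl).symm
      _ ≤ d 0 F := hd.mono (hF ▸ hsub)
  have hAX : d 0 A = d 0 X := dim_congr_asSet1 <| hA.trans <| ext fun a =>
    ⟨fun ⟨_, hab⟩ => hab.1, fun ha =>
      have ⟨c, hac, hsub⟩ := GapRel.exists_Ioc_subset hXdisc ha
      ⟨c, hsub ⟨hac, le_rfl⟩⟩⟩
  obtain ⟨T, hT, hTG⟩ := hd.exists_swap hG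
  obtain ⟨B, -, hTB⟩ := hd.exists_eq_add_of_forall_fiber hT 0 fun b a hab F hF =>
    hd.eq_zero_of_subsingleton ⟨a, hF ▸ hab⟩ (hF ▸ GapRel.subsingleton_left _ b)
  have hX1 : d 0 X + 1 ≤ 1 := calc
    d 0 X + 1 = d 1 T := by rw [hTG, hGA, hAX]; rfl
    _ = d 0 B := by rw [hTB]; simp
    _ ≤ 1 := hd.le_one B
  refine (hd.eq_zero_or_one hXne).resolve_right fun h1 => ?_
  rw [h1] at hX1
  exact absurd hX1 (by decide)

/-- Let `M` be a definably complete expansion of an ordered group and `dim`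
a dimension function on `M`. If there is a definable non-closed discrete subset `Z` of `M`
whose closure is a union of finitely many definable discrete sets, then `dim X = 0` for every
nonempty definable discrete subset `X` of `M`. -/
theorem statement_14 (L : FirstOrder.Language.{v, w}) (M : Type u) [L.Structure M]
    [LinearOrder M] [DenselyOrdered M] [NoMinOrder M] [NoMaxOrder M]
    [AddGroup M] [CovariantClass M M (· + ·) (· < ·)]
    [CovariantClass M M (Function.swap (· + ·)) (· < ·)]
    (hlt : LtDefinable L M) (hadd : AddDefinable L M) (hdc : DefinablyComplete L M)
    (d : ∀ n : ℕ, DefSet L M (n + 1) → WithBot ℕ) (hd : d ∈ DimFuns L M)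
    (Z : DefSet L M 1)
    (hZdisc : DiscreteIn (orderTop M) (asSet1 Z.1))
    (hZnotclosed : ¬ (orderTop M).IsOpen ((asSet1 Z.1)ᶜ))
    (hZclosure : ∃ (k : ℕ) (D : Fin k → DefSet L M 1),
      (∀ i, DiscreteIn (orderTop M) (asSet1 (D i).1)) ∧
      @closure M (orderTop M) (asSet1 Z.1) = ⋃ i, asSet1 (D i).1) :
    ∀ X : DefSet L M 1, (asSet1 X.1).Nonempty → DiscreteIn (orderTop M) (asSet1 X.1) →
      d 0 X = 0 :=
  statement_14_general L M hlt hadd hdc d hd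

end PaperDim
end

section
/- Let 𝓜 = (M,<,…) be an o-minimal structure and I, I₁, I₂ definable subsets of M. Then: (1) M∖I is self-sufficient if I is self-sufficient and M∖I is infinite; (2) I₁ ∩ I₂ is self-sufficient if I₁ and I₂ are self-sufficient and I₁ ∩ I₂ is infinite; (3) I₁ ∪ I₂ is self-sufficient if I₁ and I₂ are self-sufficient. -/
open FirstOrder FirstOrder.Language Set

universe u v w

namespace PaperDim

/-! Self-sufficiency of `I` is symmetric in `I` and `M ∖ I`, and a definable bijection out of an
infinite definable set `J ⊆ X ∪ Y` (with `X`, `Y` definable) restricts to one out of whichever of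
`J ∩ X`, `J ∩ Y` is infinite. Splitting along `I₁`, `I₂` or their complements then gives the
three claims. -/

section SelfSufficiency

variable {L : FirstOrder.Language.{v, w}} {M : Type u} [L.Structure M]

lemma vec_two_eta (v : Fin 2 → M) : ![v 0, v 1] = v :=
  FinVec.etaExpand_eq v

lemma comp_vec_single {n : ℕ} (g : Fin n → M) (i : Fin n) : g ∘ ![i] = fun _ => g i := by
  funext j
  fin_cases j
  rfl

lemma asSet1_image_comp_vec_single {n : ℕ} (G : Set (Fin n → M)) (i : Fin n) :
    asSet1 ((fun g : Fin n → M => g ∘ ![i]) '' G) = (fun v => v i) '' G := by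
  ext a
  simp only [asSet1, mem_ofPred_eq, mem_image, comp_vec_single]
  refine exists_congr fun g => and_congr_right fun _ => ⟨fun h => congrFun h 0, ?_⟩
  rintro rfl
  rfl

namespace IsDefBijectionGraph

variable {G : Set (Fin 2 → M)} {A B : Set M}

theorem symm (h : IsDefBijectionGraph G A B) :
    IsDefBijectionGraph {v | ![v 1, v 0] ∈ G} B A := by
  obtain ⟨hmem, hA, hB⟩ := h
  refine ⟨fun v hv => (hmem _ hv).symm, fun y hy => ?_, fun x hx => ?_⟩
  · simpa using hB y hy
  · simpa using hA x hx

theorem injOn_fst (h : IsDefBijectionGraph G A B) : InjOn (fun v : Fin 2 → M => v 0) G := by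
  intro v hv w hw (hvw : v 0 = w 0)
  obtain ⟨y, -, hy⟩ := h.2.1 (v 0) (h.1 v hv).1
  have hv' : ![v 0, v 1] ∈ G := by rwa [vec_two_eta]
  have hw' : ![v 0, w 1] ∈ G := by rwa [hvw, vec_two_eta]
  rw [← vec_two_eta v, ← vec_two_eta w, ← hvw, hy _ hv', hy _ hw']

theorem injOn_snd (h : IsDefBijectionGraph G A B) : InjOn (fun v : Fin 2 → M => v 1) G := by
  intro v hv w hw (hvw : v 1 = w 1)
  obtain ⟨x, -, hx⟩ := h.2.2 (v 1) (h.1 v hv).2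
  have hv' : ![v 0, v 1] ∈ G := by rwa [vec_two_eta]
  have hw' : ![w 0, v 1] ∈ G := by rwa [hvw, vec_two_eta]
  rw [← vec_two_eta v, ← vec_two_eta w, ← hvw, hx _ hv', hx _ hw']

theorem image_fst (h : IsDefBijectionGraph G A B) : (fun v : Fin 2 → M => v 0) '' G = A := by
  refine Subset.antisymm (image_subset_iff.2 fun v hv => (h.1 v hv).1) fun x hx => ?_
  obtain ⟨y, hy, -⟩ := h.2.1 x hx
  exact ⟨_, hy, rfl⟩

theorem image_snd (h : IsDefBijectionGraph G A B) : (fun v : Fin 2 → M => v 1) '' G = B := by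
  refine Subset.antisymm (image_subset_iff.2 fun v hv => (h.1 v hv).2) fun y hy => ?_
  obtain ⟨x, hx, -⟩ := h.2.2 y hy
  exact ⟨_, hx, rfl⟩

theorem infinite_iff (h : IsDefBijectionGraph G A B) : A.Infinite ↔ B.Infinite := by
  rw [← h.image_fst, ← h.image_snd, infinite_image_iff h.injOn_fst,
    infinite_image_iff h.injOn_snd]

theorem restrict (h : IsDefBijectionGraph G A B) {A' : Set M} (hA' : A' ⊆ A) :
    IsDefBijectionGraph {v ∈ G | v 0 ∈ A'} A' ((fun v => v 1) '' {v ∈ G | v 0 ∈ A'}) := by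
  refine ⟨fun v hv => ⟨hv.2, mem_image_of_mem _ hv⟩, fun x hx => ?_, ?_⟩
  · obtain ⟨y, hy, huniq⟩ := h.2.1 x (hA' hx)
    exact ⟨y, ⟨hy, hx⟩, fun y' hy' => huniq y' hy'.1⟩
  · rintro _ ⟨v, ⟨hvG, hvA'⟩, rfl⟩
    have hv : ![v 0, v 1] ∈ G := by rwa [vec_two_eta]
    refine ⟨v 0, ⟨hv, hvA'⟩, fun x hx => ?_⟩
    exact (h.2.2 (v 1) (h.1 v hvG).2).unique hx.1 hv

end IsDefBijectionGraph

variable (L M) in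
/-- Infiniteness of `J₂` is not required: it follows from that of `J₁` through the bijection. -/
def HasInfiniteDefBijection (A B : Set M) : Prop :=
  ∃ J₁ J₂ : DefSet L M 1, asSet1 J₁.1 ⊆ A ∧ asSet1 J₂.1 ⊆ B ∧ (asSet1 J₁.1).Infinite ∧
    ∃ G : DefSet L M 2, IsDefBijectionGraph G.1 (asSet1 J₁.1) (asSet1 J₂.1)

theorem selfSufficient_iff {I : Set M} :
    SelfSufficient L M I ↔ I.Infinite ∧ ¬ HasInfiniteDefBijection L M I Iᶜ := by
  refine and_congr_right fun _ => ⟨?_, ?_⟩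
  · rintro h ⟨J₁, J₂, h₁, h₂, hJ₁, G, hG⟩
    exact h J₁ J₂ h₁ h₂ hJ₁ (hG.infinite_iff.1 hJ₁) ⟨G, hG⟩
  · rintro h J₁ J₂ h₁ h₂ hJ₁ - ⟨G, hG⟩
    exact h ⟨J₁, J₂, h₁, h₂, hJ₁, G, hG⟩

namespace HasInfiniteDefBijection

variable {A B A' B' : Set M}

theorem mono (h : HasInfiniteDefBijection L M A B) (hA : A ⊆ A') (hB : B ⊆ B') :
    HasInfiniteDefBijection L M A' B' :=
  let ⟨J₁, J₂, h₁, h₂, hJ₁, hG⟩ := h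
  ⟨J₁, J₂, h₁.trans hA, h₂.trans hB, hJ₁, hG⟩

theorem symm (h : HasInfiniteDefBijection L M A B) : HasInfiniteDefBijection L M B A := by
  obtain ⟨J₁, J₂, h₁, h₂, hJ₁, G, hG⟩ := h
  have hswap : {v : Fin 2 → M | ![v 1, v 0] ∈ G.1} = (fun g => g ∘ ![1, 0]) ⁻¹' G.1 := by
    ext v
    simp only [mem_ofPred_eq, mem_preimage]
    congr!
    funext i
    fin_cases i <;> rfl
  have hswap_def : Set.Definable (Set.univ : Set M) L {v : Fin 2 → M | ![v 1, v 0] ∈ G.1} := by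
    rw [hswap]
    exact G.2.preimage_comp _
  exact ⟨J₂, J₁, h₂, h₁, hG.infinite_iff.1 hJ₁, ⟨_, hswap_def⟩, hG.symm⟩

theorem of_subset_of_isDefBijectionGraph {G : DefSet L M 2}
    (hG : IsDefBijectionGraph G.1 A B) (J : DefSet L M 1) (hJ : asSet1 J.1 ⊆ A)
    (hJinf : (asSet1 J.1).Infinite) : HasInfiniteDefBijection L M (asSet1 J.1) B := by
  set G' : Set (Fin 2 → M) := {v ∈ G.1 | v 0 ∈ asSet1 J.1}
  have hG'def : Set.Definable (Set.univ : Set M) L G' := by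
    have : G' = G.1 ∩ (fun g => g ∘ ![0]) ⁻¹' J.1 := by
      ext v
      simp only [G', mem_inter_iff, mem_preimage, comp_vec_single]
      rfl
    exact this ▸ G.2.inter (J.2.preimage_comp _)
  have hJ' := asSet1_image_comp_vec_single G' 1
  have hG' : IsDefBijectionGraph G' (asSet1 J.1) (asSet1 _) := hJ' ▸ hG.restrict hJ
  refine ⟨J, ⟨_, hG'def.image_comp _⟩, subset_rfl, ?_, hJinf, ⟨G', hG'def⟩, hG'⟩
  rw [hJ', ← hG.image_snd]
  exact image_mono (sep_subset _ _)

theorem union_left (X Y : DefSet L M 1)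
    (h : HasInfiniteDefBijection L M (asSet1 X.1 ∪ asSet1 Y.1) B) :
    HasInfiniteDefBijection L M (asSet1 X.1) B ∨ HasInfiniteDefBijection L M (asSet1 Y.1) B := by
  obtain ⟨J₁, J₂, h₁, h₂, hJ₁, G, hG⟩ := h
  have hsplit : asSet1 J₁.1 = (asSet1 J₁.1 ∩ asSet1 X.1) ∪ (asSet1 J₁.1 ∩ asSet1 Y.1) := by
    rw [← inter_union_distrib_left, inter_eq_left.2 h₁]
  rw [hsplit, infinite_union] at hJ₁
  refine hJ₁.imp (fun hX => ?_) (fun hY => ?_)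
  · exact (of_subset_of_isDefBijectionGraph hG ⟨_, J₁.2.inter X.2⟩ inter_subset_left hX).mono
      inter_subset_right h₂
  · exact (of_subset_of_isDefBijectionGraph hG ⟨_, J₁.2.inter Y.2⟩ inter_subset_left hY).mono
      inter_subset_right h₂

theorem union_right (X Y : DefSet L M 1)
    (h : HasInfiniteDefBijection L M A (asSet1 X.1 ∪ asSet1 Y.1)) :
    HasInfiniteDefBijection L M A (asSet1 X.1) ∨ HasInfiniteDefBijection L M A (asSet1 Y.1) :=
  (h.symm.union_left X Y).imp symm symm

end HasInfiniteDefBijection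

end SelfSufficiency

theorem statement_15_general (L : FirstOrder.Language.{v, w}) (M : Type u) [L.Structure M]
    (I I₁ I₂ : DefSet L M 1) :
    (SelfSufficient L M (asSet1 I.1) → ((asSet1 I.1)ᶜ : Set M).Infinite →
      SelfSufficient L M ((asSet1 I.1)ᶜ)) ∧
    (SelfSufficient L M (asSet1 I₁.1) → SelfSufficient L M (asSet1 I₂.1) →
      (asSet1 I₁.1 ∩ asSet1 I₂.1).Infinite →
      SelfSufficient L M (asSet1 I₁.1 ∩ asSet1 I₂.1)) ∧
    (SelfSufficient L M (asSet1 I₁.1) → SelfSufficient L M (asSet1 I₂.1) →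
      SelfSufficient L M (asSet1 I₁.1 ∪ asSet1 I₂.1)) := by
  simp only [selfSufficient_iff]
  refine ⟨?_, ?_, ?_⟩
  · rintro ⟨-, hI⟩ hIc
    refine ⟨hIc, fun h => hI ?_⟩
    rw [compl_compl] at h
    exact h.symm
  · rintro ⟨-, h₁⟩ ⟨-, h₂⟩ hinf
    refine ⟨hinf, fun h => ?_⟩
    rw [compl_inter] at h
    rcases h.union_right ⟨_, I₁.2.compl⟩ ⟨_, I₂.2.compl⟩ with h | h
    exacts [h₁ (h.mono inter_subset_left subset_rfl), h₂ (h.mono inter_subset_right subset_rfl)]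
  · rintro ⟨hinf, h₁⟩ ⟨-, h₂⟩
    refine ⟨hinf.mono subset_union_left, fun h => ?_⟩
    rcases h.union_left I₁ I₂ with h | h
    exacts [h₁ (h.mono subset_rfl (compl_subset_compl.2 subset_union_left)),
      h₂ (h.mono subset_rfl (compl_subset_compl.2 subset_union_right))]

/-- In an o-minimal structure: (1) the complement of a self-sufficient set
is self-sufficient if it is infinite; (2) the intersection of two self-sufficient sets is
self-sufficient if it is infinite; (3) the union of two self-sufficient sets is
self-sufficient. -/
theorem statement_15 (L : FirstOrder.Language.{v, w}) (M : Type u) [L.Structure M]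
    [LinearOrder M] [DenselyOrdered M] [NoMinOrder M] [NoMaxOrder M]
    (hlt : LtDefinable L M) (hom : OMinimal L M)
    (I I₁ I₂ : DefSet L M 1) :
    (SelfSufficient L M (asSet1 I.1) → ((asSet1 I.1)ᶜ : Set M).Infinite →
      SelfSufficient L M ((asSet1 I.1)ᶜ)) ∧
    (SelfSufficient L M (asSet1 I₁.1) → SelfSufficient L M (asSet1 I₂.1) →
      (asSet1 I₁.1 ∩ asSet1 I₂.1).Infinite →
      SelfSufficient L M (asSet1 I₁.1 ∩ asSet1 I₂.1)) ∧
    (SelfSufficient L M (asSet1 I₁.1) → SelfSufficient L M (asSet1 I₂.1) →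
      SelfSufficient L M (asSet1 I₁.1 ∪ asSet1 I₂.1)) :=
  statement_15_general L M I I₁ I₂

end PaperDim
end
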